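/- arXiv:2008.01938 — 3 statements merged into one kernel-verified Lean document; each statement's English description precedes it below -/
import Mathlib

section
/- In substep 2 of one execution of the inner loop of the MCM pipeline algorithm, no two distinct active threads read the same element of the linearized solution table ST. -/
/-!
Two threads reading the same right operand read the same cell, so they work in the same column
and their rows differ by `q - p`: the thread with the smaller offset sits lower, on a shorter
chain. Diagonal-major ranking puts that cell strictly earlier, whereas the step equation
`σ c + p = i + 1` puts the cell of the smaller offset strictly later.
-/

/-- The triangular table `{(i,j) : 1 ≤ i ≤ j ≤ n}`. -/
def triT (n : ℕ) : Finset (ℕ × ℕ) :=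
  ((Finset.Icc 1 n) ×ˢ (Finset.Icc 1 n)).filter (fun p => p.1 ≤ p.2)

/-- Diagonal-major order: first by chain length `j - i`, then by row `i`. -/
def dmLt (c d : ℕ × ℕ) : Prop :=
  c.2 - c.1 < d.2 - d.1 ∨ (c.2 - c.1 = d.2 - d.1 ∧ c.1 < d.1)

lemma fst_le_snd_of_mem_triT {n : ℕ} {c : ℕ × ℕ} (hc : c ∈ triT n) : c.1 ≤ c.2 :=
  (Finset.mem_filter.1 hc).2

lemma dmLt_of_row_lt {r s col : ℕ} (hrs : r < s) (hs : s ≤ col) : dmLt (s, col) (r, col) :=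
  Or.inl (by dsimp only; omega)

lemma rank_lt_rank_of_row_lt {n : ℕ} {σ : ℕ × ℕ → ℕ}
    (hmono : ∀ c ∈ triT n, ∀ d ∈ triT n, dmLt c d → σ c < σ d) {r s col : ℕ}
    (hr : (r, col) ∈ triT n) (hs : (s, col) ∈ triT n) (hrs : r < s) :
    σ (s, col) < σ (r, col) :=
  hmono _ hs _ hr (dmLt_of_row_lt hrs (fst_le_snd_of_mem_triT hs))

theorem mcm_substep2_conflict_free_general (n : ℕ) (σ : ℕ × ℕ → ℕ)
    (hσ : Set.InjOn σ (triT n : Set (ℕ × ℕ)))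
    (hmono : ∀ c ∈ triT n, ∀ d ∈ triT n, dmLt c d → σ c < σ d)
    (i p q rp colp rq colq : ℕ)
    (hpq : p ≠ q)
    (hcp : (rp, colp) ∈ triT n) (hcq : (rq, colq) ∈ triT n)
    (hσp : σ (rp, colp) + p = i + 1) (hσq : σ (rq, colq) + q = i + 1)
    (hRp : (rp + p, colp) ∈ triT n) (hRq : (rq + q, colq) ∈ triT n) :
    σ (rp + p, colp) ≠ σ (rq + q, colq) := by
  intro h
  obtain ⟨hrow, hcol⟩ := Prod.ext_iff.1 (hσ hRp hRq h)
  dsimp only at hrow hcol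
  subst hcol
  rcases lt_or_gt_of_ne hpq with hlt | hgt
  · have := rank_lt_rank_of_row_lt hmono hcq hcp (by omega)
    omega
  · have := rank_lt_rank_of_row_lt hmono hcp hcq (by omega)
    omega

/-- Substep 2 of the MCM pipeline inner loop: at outer step `i`, active
threads `p ≠ q` work on cells `σ⁻¹(i−p+1) = (rp,colp)` and
`σ⁻¹(i−q+1) = (rq,colq)` and read right operands `σ(rp+p, colp)` and
`σ(rq+q, colq)`; these read indices differ, i.e. no two distinct active
threads read the same element of `ST`. -/
theorem mcm_substep2_conflict_free (n : ℕ) (σ : ℕ × ℕ → ℕ)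
    (hσ : Set.InjOn σ (triT n : Set (ℕ × ℕ)))
    (hmono : ∀ c ∈ triT n, ∀ d ∈ triT n, dmLt c d → σ c < σ d)
    (i p q rp colp rq colq : ℕ)
    (hp : 1 ≤ p) (hq : 1 ≤ q) (hpq : p ≠ q)
    (hcp : (rp, colp) ∈ triT n) (hcq : (rq, colq) ∈ triT n)
    (hσp : σ (rp, colp) + p = i + 1) (hσq : σ (rq, colq) + q = i + 1)
    (hactp : p ≤ colp - rp) (hactq : q ≤ colq - rq)
    (hRp : (rp + p, colp) ∈ triT n) (hRq : (rq + q, colq) ∈ triT n) :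
    σ (rp + p, colp) ≠ σ (rq + q, colq) :=
  mcm_substep2_conflict_free_general n σ hσ hmono i p q rp colp rq colq hpq hcp hcq hσp hσq hRp hRq
end

section
/- For the S-DP pipeline algorithm, two distinct threads p < q read the same element of ST at the same step if and only if a_p − a_q = q − p; in particular, for strictly decreasing offsets this happens iff the sub-sequence a_p, a_{p+1}, …, a_q consists of consecutive integers (a_r = a_{r+1} + 1 for all p ≤ r < q). -/
/-!
Shifting the offsets by the thread index, `g r = a r + r`, turns "strictly decreasing" into
"antitone" and the conflict condition `a p - a q = q - p` into `g p = g q`. An antitone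
sequence takes equal values at the ends of an interval iff it is constant on it, and
constancy of `g` is exactly `a r = a (r + 1) + 1`.
-/

open Set

lemma eq_of_forall_eq_succ {α : Type*} {g : ℕ → α} {p q : ℕ}
    (hg : ∀ r, p ≤ r → r < q → g r = g (r + 1)) (hpq : p ≤ q) : g p = g q := by
  induction q, hpq using Nat.le_induction with
  | base => rfl
  | succ n hpn ih =>
    rw [ih fun r hpr hrn ↦ hg r hpr (hrn.trans n.lt_succ_self), hg n hpn n.lt_succ_self]

lemma AntitoneOn.eq_iff_forall_eq_succ {α : Type*} [PartialOrder α] {g : ℕ → α} {p q : ℕ}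
    (hg : AntitoneOn g (Icc p q)) (hpq : p ≤ q) :
    g p = g q ↔ ∀ r, p ≤ r → r < q → g r = g (r + 1) := by
  refine ⟨fun hend r hpr hrq ↦ ?_, fun h ↦ eq_of_forall_eq_succ h hpq⟩
  have hr : r ∈ Icc p q := ⟨hpr, hrq.le⟩
  have hr1 : r + 1 ∈ Icc p q := ⟨by omega, hrq⟩
  refine le_antisymm ?_ (hg hr hr1 r.le_succ)
  calc g r ≤ g p := hg ⟨le_rfl, hpq⟩ hr hpr
    _ = g q := hend
    _ ≤ g (r + 1) := hg hr1 ⟨hpq, le_rfl⟩ hrq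

theorem sdp_conflict_iff_consecutive_general (k : ℕ) (a : ℕ → ℤ) (i : ℤ)
    (hdec : ∀ m : ℕ, 1 ≤ m → m < k → a (m + 1) < a m)
    (p q : ℕ) (hp1 : 1 ≤ p) (hpq : p < q) (hqk : q ≤ k) :
    (((i - (p : ℤ) + 1) - a p = (i - (q : ℤ) + 1) - a q) ↔
        a p - a q = (q : ℤ) - (p : ℤ)) ∧
    ((a p - a q = (q : ℤ) - (p : ℤ)) ↔
        ∀ r : ℕ, p ≤ r → r < q → a r = a (r + 1) + 1) := by
  set g : ℕ → ℤ := fun r ↦ a r + r with hg_def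
  have hanti : AntitoneOn g (Icc p q) := by
    refine antitoneOn_of_add_one_le ordConnected_Icc fun r _ hr hr1 ↦ ?_
    have := hdec r (hp1.trans hr.1) (by have := hr1.2; omega)
    simp only [hg_def]
    push_cast
    omega
  refine ⟨by omega, ?_⟩
  calc a p - a q = q - p ↔ g p = g q := by simp only [hg_def]; omega
    _ ↔ ∀ r, p ≤ r → r < q → g r = g (r + 1) := hanti.eq_iff_forall_eq_succ hpq.le
    _ ↔ ∀ r, p ≤ r → r < q → a r = a (r + 1) + 1 := by
      simp only [hg_def]
      push_cast
      exact forall₃_congr fun _ _ _ ↦ by omega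

/-- In the S-DP pipeline (offsets `a 1 > ⋯ > a k > 0`, thread `j` reading
index `(i − j + 1) − a j`), threads `p < q` read the same element at the same
step iff `a p − a q = q − p`, which for strictly decreasing offsets happens
iff the sub-sequence `a p, …, a q` consists of consecutive integers. -/
theorem sdp_conflict_iff_consecutive (k : ℕ) (a : ℕ → ℤ) (i : ℤ)
    (hpos : ∀ m : ℕ, 1 ≤ m → m ≤ k → 0 < a m)
    (hdec : ∀ m : ℕ, 1 ≤ m → m < k → a (m + 1) < a m)
    (p q : ℕ) (hp1 : 1 ≤ p) (hpq : p < q) (hqk : q ≤ k) :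
    (((i - (p : ℤ) + 1) - a p = (i - (q : ℤ) + 1) - a q) ↔
        a p - a q = (q : ℤ) - (p : ℤ)) ∧
    ((a p - a q = (q : ℤ) - (p : ℤ)) ↔
        ∀ r : ℕ, p ≤ r → r < q → a r = a (r + 1) + 1) :=
  sdp_conflict_iff_consecutive_general k a i hdec p q hp1 hpq hqk
end

section
/- Correctness of the S-DP pipeline schedule: in the pipeline algorithm, the value ST[m] (for a_1 ≤ m ≤ n−1) receives its j-th update (using offset a_j) at outer step i = m + j − 1, and after outer step m + k − 1 the value ST[m] equals the full fold ST[m−a_1] ⊗ ⋯ ⊗ ST[m−a_k]; moreover every read ST[m − a_j] performed at step m + j − 1 uses a value that was finalized at step (m − a_j) + k − 1 < m + j − 1, so all reads see finalized values. -/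
/-- Left-associated fold `x 1 ⊗ x 2 ⊗ ⋯ ⊗ x k`. -/
def loopST (op : ℤ → ℤ → ℤ) (x : ℕ → ℤ) : ℕ → ℤ
  | 0 => x 1
  | 1 => x 1
  | (j + 2) => op (loopST op x (j + 1)) (x (j + 2))

/-!
Cell `m` is touched exactly at the steps `m, m + 1, …, m + k - 1`, the `j`-th touch folding in
`ST[m - a j]`, so by induction on `j` the cell holds the partial fold of its first `j` reads after
step `m + j - 1`. Every read is of a cell that is already final: since the offsets are strictly
decreasing positive integers, `a j ≥ k - j + 1`, so cell `m - a j` received its last update at step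
`m - a j + k - 1 ≤ m + j - 2`.
-/

section Offsets

variable {k : ℕ} {a : ℕ → ℕ}

lemma le_offset_add_of_strictAnti (hak : 0 < a k)
    (hdec : ∀ j : ℕ, 1 ≤ j → j < k → a (j + 1) < a j) {j : ℕ} (hj : 1 ≤ j) (hjk : j ≤ k) :
    k + 1 ≤ a j + j := by
  induction hjk using Nat.decreasingInduction with
  | self => omega
  | of_succ j hjk ih => have := hdec j hj hjk; have := ih (by omega); omega

lemma offset_le_first_of_strictAnti (hdec : ∀ j : ℕ, 1 ≤ j → j < k → a (j + 1) < a j)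
    {j : ℕ} (hj : 1 ≤ j) (hjk : j ≤ k) : a j ≤ a 1 := by
  induction j, hj using Nat.le_induction with
  | base => rfl
  | succ j hj ih => have := hdec j hj hjk; have := ih (by omega); omega

lemma sub_offset_add_pred_lt (hak : 0 < a k)
    (hdec : ∀ j : ℕ, 1 ≤ j → j < k → a (j + 1) < a j) {m j : ℕ} (hj : 1 ≤ j) (hjk : j ≤ k)
    (hm : a 1 ≤ m) : (m - a j) + k - 1 < m + j - 1 := by
  have := le_offset_add_of_strictAnti hak hdec hj hjk
  have := offset_le_first_of_strictAnti hdec hj hjk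
  omega

end Offsets

lemma loopST_succ (op : ℤ → ℤ → ℤ) (x : ℕ → ℤ) {j : ℕ} (hj : 1 ≤ j) :
    loopST op x (j + 1) = op (loopST op x j) (x (j + 1)) := by
  obtain ⟨i, rfl⟩ := Nat.exists_eq_add_of_le' hj
  rfl

section Pipeline

variable {op : ℤ → ℤ → ℤ} {n k : ℕ} {a : ℕ → ℕ} {St : ℕ → ℕ → ℤ}

lemma St_eq_of_last_update_le
    (hframe : ∀ i x : ℕ, 1 ≤ i →
      (¬ ∃ j : ℕ, 1 ≤ j ∧ j ≤ k ∧ i = x + j - 1 ∧ a 1 ≤ x ∧ x < n) →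
      St i x = St (i - 1) x)
    {y i : ℕ} (hi : y + k - 1 ≤ i) : St i y = St (y + k - 1) y := by
  induction i, hi using Nat.le_induction with
  | base => rfl
  | succ i hi ih =>
    rw [hframe (i + 1) y (by omega) (by rintro ⟨j, hj, hjk, hij, -⟩; omega), Nat.add_sub_cancel, ih]

lemma St_eq_loopST_of_le
    (hak : 0 < a k) (hdec : ∀ j : ℕ, 1 ≤ j → j < k → a (j + 1) < a j)
    (hupd : ∀ x j : ℕ, 1 ≤ j → j ≤ k → a 1 ≤ x → x < n →
      St (x + j - 1) x =
        if j = 1 then St (x + j - 2) (x - a 1)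
        else op (St (x + j - 2) x) (St (x + j - 2) (x - a j)))
    (hframe : ∀ i x : ℕ, 1 ≤ i →
      (¬ ∃ j : ℕ, 1 ≤ j ∧ j ≤ k ∧ i = x + j - 1 ∧ a 1 ≤ x ∧ x < n) →
      St i x = St (i - 1) x)
    {m : ℕ} (hm : a 1 ≤ m) (hmn : m < n) {j : ℕ} (hj : 1 ≤ j) (hjk : j ≤ k) :
    St (m + j - 1) m = loopST op (fun t => St (m + k - 1) (m - a t)) j := by
  have read_final : ∀ j, 1 ≤ j → j ≤ k →
      St (m + j - 2) (m - a j) = St (m + k - 1) (m - a j) := fun j hj hjk => by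
    have := sub_offset_add_pred_lt hak hdec hj hjk hm
    rw [St_eq_of_last_update_le hframe (by omega),
      St_eq_of_last_update_le hframe (i := m + k - 1) (by omega)]
  induction j, hj using Nat.le_induction with
  | base =>
    rw [hupd m 1 le_rfl (by omega) hm hmn, if_pos rfl, read_final 1 le_rfl (by omega)]
    rfl
  | succ j hj ih =>
    rw [hupd m (j + 1) (by omega) hjk hm hmn, if_neg (by omega), read_final (j + 1) (by omega) hjk,
      loopST_succ op _ hj, show m + (j + 1) - 2 = m + j - 1 by omega, ih (by omega)]

end Pipeline

theorem sdp_pipeline_correct_general (op : ℤ → ℤ → ℤ)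
    (n k : ℕ) (hk : 1 ≤ k) (a : ℕ → ℕ)
    (hpos : ∀ j : ℕ, 1 ≤ j → j ≤ k → 0 < a j)
    (hdec : ∀ j : ℕ, 1 ≤ j → j < k → a (j + 1) < a j)
    (St : ℕ → ℕ → ℤ)
    (hupd : ∀ x j : ℕ, 1 ≤ j → j ≤ k → a 1 ≤ x → x < n →
      St (x + j - 1) x =
        if j = 1 then St (x + j - 2) (x - a 1)
        else op (St (x + j - 2) x) (St (x + j - 2) (x - a j)))
    (hframe : ∀ i x : ℕ, 1 ≤ i →
      (¬ ∃ j : ℕ, 1 ≤ j ∧ j ≤ k ∧ i = x + j - 1 ∧ a 1 ≤ x ∧ x < n) →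
      St i x = St (i - 1) x) :
    (∀ m j : ℕ, 1 ≤ j → a 1 ≤ m → (m + j - 1) - j + 1 = m) ∧
    (∀ m j : ℕ, 1 ≤ j → j ≤ k → a 1 ≤ m → (m - a j) + k - 1 < m + j - 1) ∧
    (∀ m : ℕ, a 1 ≤ m → m < n →
      St (m + k - 1) m = loopST op (fun t => St (m + k - 1) (m - a t)) k) := by
  have hak : 0 < a k := hpos k hk le_rfl
  refine ⟨?_, fun m j hj hjk hm => sub_offset_add_pred_lt hak hdec hj hjk hm,
    fun m hm hmn => St_eq_loopST_of_le hak hdec hupd hframe hm hmn hk le_rfl⟩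
  intro m j hj hm
  -- truncated subtraction: the identity needs `m ≥ a 1 > 0`
  have := hpos 1 le_rfl hk
  omega

/-- Correctness of the S-DP pipeline schedule.  `St i` is the content of the
array `ST` after outer step `i`.  `hupd` says position `x` (with
`a 1 ≤ x < n`) receives its `j`-th update (using offset `a j`) at outer step
`i = x + j − 1`, by thread `j`; `hframe` says nothing else changes.  Then:
(1) the update of `ST[m]` by thread `j` at step `i = m + j − 1` indeed has
`i − j + 1 = m`; (2) every read `ST[m − a j]` performed at step `m + j − 1`
uses a value finalized at step `(m − a j) + k − 1 < m + j − 1`; (3) after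
outer step `m + k − 1` the value `ST[m]` equals the full fold
`ST[m−a 1] ⊗ ⋯ ⊗ ST[m−a k]`. -/
theorem sdp_pipeline_correct (op : ℤ → ℤ → ℤ)
    (hassoc : ∀ x y z : ℤ, op (op x y) z = op x (op y z))
    (n k : ℕ) (hk : 1 ≤ k) (a : ℕ → ℕ)
    (hpos : ∀ j : ℕ, 1 ≤ j → j ≤ k → 0 < a j)
    (hdec : ∀ j : ℕ, 1 ≤ j → j < k → a (j + 1) < a j)
    (St : ℕ → ℕ → ℤ)
    (hupd : ∀ x j : ℕ, 1 ≤ j → j ≤ k → a 1 ≤ x → x < n →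
      St (x + j - 1) x =
        if j = 1 then St (x + j - 2) (x - a 1)
        else op (St (x + j - 2) x) (St (x + j - 2) (x - a j)))
    (hframe : ∀ i x : ℕ, 1 ≤ i →
      (¬ ∃ j : ℕ, 1 ≤ j ∧ j ≤ k ∧ i = x + j - 1 ∧ a 1 ≤ x ∧ x < n) →
      St i x = St (i - 1) x) :
    (∀ m j : ℕ, 1 ≤ j → a 1 ≤ m → (m + j - 1) - j + 1 = m) ∧
    (∀ m j : ℕ, 1 ≤ j → j ≤ k → a 1 ≤ m → (m - a j) + k - 1 < m + j - 1) ∧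
    (∀ m : ℕ, a 1 ≤ m → m < n →
      St (m + k - 1) m = loopST op (fun t => St (m + k - 1) (m - a t)) k) :=
  sdp_pipeline_correct_general op n k hk a hpos hdec St hupd hframe
end
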